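/- Let (δ, v, ϖ) be feasible for the penalized formulation (R). Then δ is an ε-Nash equilibrium with ε = ϖ · max_{i ∈ N} |A_i|: for every player i and every mixed strategy δ'_i for i, the expected utility of i under the profile obtained from δ by replacing δ_i with δ'_i is at most u_i(δ) + ϖ · max_{j ∈ N} |A_j|. -/

import Mathlib

open Finset

variable {N : Type*} [Fintype N] [DecidableEq N] [Nonempty N]
variable {A : N → Type*} [∀ i, Fintype (A i)] [∀ i, DecidableEq (A i)]
variable [∀ i, Nonempty (A i)]

/-- `δ` is a mixed strategy profile: each `δ i` is nonnegative and sums to 1. -/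
def IsMixedProfile {N : Type*} {A : N → Type*} [∀ i, Fintype (A i)]
    (δ : ∀ i, A i → ℝ) : Prop :=
  (∀ i a, 0 ≤ δ i a) ∧ ∀ i, ∑ a, δ i a = 1

/-- Expected utility of player `i` under mixed strategy profile `δ`. -/
def expUtil {N : Type*} [Fintype N] [DecidableEq N] {A : N → Type*}
    [∀ i, Fintype (A i)] (u : N → (∀ j, A j) → ℝ) (δ : ∀ i, A i → ℝ) (i : N) : ℝ :=
  ∑ a : ∀ j, A j, (∏ j, δ j (a j)) * u i a

/-- The point-mass (pure) strategy on action `ai`. -/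
def pureStrat {N : Type*} {A : N → Type*} [∀ i, DecidableEq (A i)]
    (i : N) (ai : A i) : A i → ℝ := fun b => if b = ai then 1 else 0

/-- `u_i(a_i, δ_{-i})`: expected utility of player `i` when playing the pure
action `ai` against the opponents' profile `δ_{-i}`. -/
def devUtil {N : Type*} [Fintype N] [DecidableEq N] {A : N → Type*}
    [∀ i, Fintype (A i)] [∀ i, DecidableEq (A i)]
    (u : N → (∀ j, A j) → ℝ) (δ : ∀ i, A i → ℝ) (i : N) (ai : A i) : ℝ :=
  expUtil u (Function.update δ i (pureStrat i ai)) i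

/-- Minimum of `u i` over pure action profiles. -/
noncomputable def minU {N : Type*} [Fintype N] [DecidableEq N] {A : N → Type*}
    [∀ i, Fintype (A i)] [∀ i, Nonempty (A i)]
    (u : N → (∀ j, A j) → ℝ) (i : N) : ℝ :=
  Finset.univ.inf' Finset.univ_nonempty (u i)

/-- Maximum of `u i` over pure action profiles. -/
noncomputable def maxU {N : Type*} [Fintype N] [DecidableEq N] {A : N → Type*}
    [∀ i, Fintype (A i)] [∀ i, Nonempty (A i)]
    (u : N → (∀ j, A j) → ℝ) (i : N) : ℝ :=
  Finset.univ.sup' Finset.univ_nonempty (u i)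

/-- `δ` is a Nash equilibrium. -/
def IsNashEq {N : Type*} [Fintype N] [DecidableEq N] {A : N → Type*}
    [∀ i, Fintype (A i)] (u : N → (∀ j, A j) → ℝ) (δ : ∀ i, A i → ℝ) : Prop :=
  IsMixedProfile δ ∧ ∀ (i : N) (δ' : A i → ℝ), (∀ a, 0 ≤ δ' a) → (∑ a, δ' a = 1) →
    expUtil u (Function.update δ i δ') i ≤ expUtil u δ i

/-- `δ` is an ε-Nash equilibrium. -/
def IsEpsNashEq {N : Type*} [Fintype N] [DecidableEq N] {A : N → Type*}
    [∀ i, Fintype (A i)] (u : N → (∀ j, A j) → ℝ) (δ : ∀ i, A i → ℝ) (ε : ℝ) : Prop :=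
  IsMixedProfile δ ∧ ∀ (i : N) (δ' : A i → ℝ), (∀ a, 0 ≤ δ' a) → (∑ a, δ' a = 1) →
    expUtil u (Function.update δ i δ') i ≤ expUtil u δ i + ε

/-- Feasibility for the mixed-integer formulation (P). -/
def FeasP {N : Type*} [Fintype N] [DecidableEq N] {A : N → Type*}
    [∀ i, Fintype (A i)] [∀ i, DecidableEq (A i)] [∀ i, Nonempty (A i)]
    (u : N → (∀ j, A j) → ℝ) (δ : ∀ i, A i → ℝ) (v : N → ℝ)
    (z s : ∀ i, A i → ℝ) : Prop :=
  IsMixedProfile δ ∧ ∀ (i : N) (ai : A i),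
    v i = s i ai + devUtil u δ i ai ∧
    δ i ai ≤ z i ai ∧
    s i ai ≤ (1 - z i ai) * (maxU u i - minU u i) ∧
    0 ≤ s i ai ∧ s i ai ≤ maxU u i - minU u i ∧
    minU u i ≤ v i ∧ v i ≤ maxU u i ∧
    (z i ai = 0 ∨ z i ai = 1)

/-- Feasibility for the continuous formulation (Q). -/
def FeasQ {N : Type*} [Fintype N] [DecidableEq N] {A : N → Type*}
    [∀ i, Fintype (A i)] [∀ i, DecidableEq (A i)] [∀ i, Nonempty (A i)]
    (u : N → (∀ j, A j) → ℝ) (δ : ∀ i, A i → ℝ) (v : N → ℝ) : Prop :=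
  IsMixedProfile δ ∧ ∀ (i : N) (ai : A i),
    0 ≤ v i - devUtil u δ i ai ∧
    δ i ai * (v i - devUtil u δ i ai) = 0 ∧
    minU u i ≤ v i ∧ v i ≤ maxU u i

/-- Feasibility for the penalized formulation (R). -/
def FeasR {N : Type*} [Fintype N] [DecidableEq N] {A : N → Type*}
    [∀ i, Fintype (A i)] [∀ i, DecidableEq (A i)] [∀ i, Nonempty (A i)]
    (u : N → (∀ j, A j) → ℝ) (δ : ∀ i, A i → ℝ) (v : N → ℝ) (ϖ : ℝ) : Prop :=
  IsMixedProfile δ ∧ ∀ (i : N) (ai : A i),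
    δ i ai * (v i - devUtil u δ i ai) ≤ ϖ ∧
    -(δ i ai * (v i - devUtil u δ i ai)) ≤ ϖ ∧
    0 ≤ v i - devUtil u δ i ai ∧
    minU u i ≤ v i ∧ v i ≤ maxU u i

/-! Playing a mixed strategy `σ` against `δ_{-i}` yields the `σ`-average of the pure deviation
payoffs `u_i(b, δ_{-i})`, each at most `v i`, so no deviation earns more than `v i`. With `σ = δ i`
the same average gives `u_i(δ) = v i - ∑ b, δ i b * (v i - u_i(b, δ_{-i}))`, and each of these
`|A i|` complementarity terms is at most `ϖ`. -/

theorem prod_update_apply {N : Type*} [Fintype N] [DecidableEq N] {A : N → Type*}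
    {M : Type*} [CommMonoid M] (δ : ∀ i, A i → M) (i : N) (σ : A i → M) (a : ∀ j, A j) :
    ∏ j, Function.update δ i σ j (a j) = σ (a i) * ∏ j ∈ univ \ {i}, δ j (a j) := by
  simp_rw [Function.apply_update (fun j (f : A j → M) => f (a j))]
  exact prod_update_of_mem (mem_univ i) _ _

theorem expUtil_update_eq_sum_devUtil {N : Type*} [Fintype N] [DecidableEq N]
    {A : N → Type*} [∀ i, Fintype (A i)] [∀ i, DecidableEq (A i)]
    (u : N → (∀ j, A j) → ℝ) (δ : ∀ i, A i → ℝ) (i : N) (σ : A i → ℝ) :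
    expUtil u (Function.update δ i σ) i = ∑ b, σ b * devUtil u δ i b := by
  simp only [devUtil, expUtil, prod_update_apply, pureStrat, mul_sum, ite_mul, one_mul,
    zero_mul, mul_ite, mul_zero]
  rw [sum_comm]
  simp only [sum_ite_eq, mem_univ, if_true, mul_assoc]

theorem expUtil_eq_sum_devUtil {N : Type*} [Fintype N] [DecidableEq N]
    {A : N → Type*} [∀ i, Fintype (A i)] [∀ i, DecidableEq (A i)]
    (u : N → (∀ j, A j) → ℝ) (δ : ∀ i, A i → ℝ) (i : N) :
    expUtil u δ i = ∑ b, δ i b * devUtil u δ i b := by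
  rw [← expUtil_update_eq_sum_devUtil, Function.update_eq_self]

theorem FeasR.nonneg {N : Type*} [Fintype N] [DecidableEq N] [Nonempty N] {A : N → Type*}
    [∀ i, Fintype (A i)] [∀ i, DecidableEq (A i)] [∀ i, Nonempty (A i)]
    {u : N → (∀ j, A j) → ℝ} {δ : ∀ i, A i → ℝ} {v : N → ℝ} {ϖ : ℝ}
    (hR : FeasR u δ v ϖ) : 0 ≤ ϖ := by
  obtain ⟨i⟩ := ‹Nonempty N›
  obtain ⟨b⟩ := ‹∀ i, Nonempty (A i)› i
  exact (mul_nonneg (hR.1.1 i b) (hR.2 i b).2.2.1).trans (hR.2 i b).1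

theorem FeasR.expUtil_update_le {N : Type*} [Fintype N] [DecidableEq N] {A : N → Type*}
    [∀ i, Fintype (A i)] [∀ i, DecidableEq (A i)] [∀ i, Nonempty (A i)]
    {u : N → (∀ j, A j) → ℝ} {δ : ∀ i, A i → ℝ} {v : N → ℝ} {ϖ : ℝ}
    (hR : FeasR u δ v ϖ) {i : N} {σ : A i → ℝ} (hσ_nonneg : ∀ a, 0 ≤ σ a)
    (hσ_sum : ∑ a, σ a = 1) :
    expUtil u (Function.update δ i σ) i ≤ v i :=
  calc expUtil u (Function.update δ i σ) i = ∑ b, σ b * devUtil u δ i b :=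
        expUtil_update_eq_sum_devUtil u δ i σ
    _ ≤ ∑ b, σ b * v i := sum_le_sum fun b _ =>
        mul_le_mul_of_nonneg_left (sub_nonneg.1 (hR.2 i b).2.2.1) (hσ_nonneg b)
    _ = v i := by rw [← sum_mul, hσ_sum, one_mul]

theorem FeasR.sub_card_mul_le_expUtil {N : Type*} [Fintype N] [DecidableEq N]
    {A : N → Type*} [∀ i, Fintype (A i)] [∀ i, DecidableEq (A i)] [∀ i, Nonempty (A i)]
    {u : N → (∀ j, A j) → ℝ} {δ : ∀ i, A i → ℝ} {v : N → ℝ} {ϖ : ℝ}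
    (hR : FeasR u δ v ϖ) (i : N) :
    v i - Fintype.card (A i) * ϖ ≤ expUtil u δ i :=
  calc v i - Fintype.card (A i) * ϖ ≤ v i - ∑ b, δ i b * (v i - devUtil u δ i b) := by
        gcongr
        simpa using sum_le_card_nsmul univ _ ϖ fun b _ => (hR.2 i b).1
    _ = ∑ b, δ i b * devUtil u δ i b := by
        simp only [mul_sub, sum_sub_distrib, ← sum_mul, hR.1.2 i, one_mul, sub_sub_cancel]
    _ = expUtil u δ i := (expUtil_eq_sum_devUtil u δ i).symm

/-- Any feasible point of (R) with objective value `ϖ` is an `ε`-Nash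
equilibrium with `ε = ϖ · max_{i ∈ N} |A_i|`. -/
theorem feasR_epsNash (u : N → (∀ j, A j) → ℝ) (δ : ∀ i, A i → ℝ) (v : N → ℝ)
    (ϖ : ℝ) (hR : FeasR u δ v ϖ) :
    ∀ (i : N) (δ' : A i → ℝ), (∀ a, 0 ≤ δ' a) → (∑ a, δ' a = 1) →
      expUtil u (Function.update δ i δ') i ≤
        expUtil u δ i +
          ϖ * Finset.univ.sup' Finset.univ_nonempty
            (fun j : N => (Fintype.card (A j) : ℝ)) := by
  intro i δ' hδ'_nonneg hδ'_sum
  have hcard : (Fintype.card (A i) : ℝ) ≤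
      univ.sup' univ_nonempty (fun j : N => (Fintype.card (A j) : ℝ)) :=
    le_sup' (fun j : N => (Fintype.card (A j) : ℝ)) (mem_univ i)
  have hϖ : 0 ≤ ϖ := hR.nonneg
  calc expUtil u (Function.update δ i δ') i ≤ v i := hR.expUtil_update_le hδ'_nonneg hδ'_sum
    _ ≤ expUtil u δ i + ϖ * Fintype.card (A i) := by
        linarith [hR.sub_card_mul_le_expUtil i]
    _ ≤ _ := by gcongr
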